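/- A 1D cellular automaton F, viewed as a 2D cellular automaton G acting on A^ℤ² by applying the 1D rule along each horizontal row independently, is sensitive on A^ℤ² if and only if F is sensitive on A^ℤ; and G has an equicontinuous point if and only if F has one. -/
import Mathlib


open Classical in
/-- The Cantor-like distance on `ℤ → A`. -/
noncomputable def d1 {A : Type*} (x y : ℤ → A) : ℝ :=
  if x = y then 0
  else (2 : ℝ) ^ (-((sInf {n : ℕ | ∃ i : ℤ, x i ≠ y i ∧ i.natAbs = n} : ℕ) : ℤ))

/-- `x` is an equicontinuous point of `F` on `ℤ → A`. -/
def IsEquicontinuousPt1 {A : Type*} (F : (ℤ → A) → (ℤ → A)) (x : ℤ → A) : Prop :=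
  ∀ ε > (0:ℝ), ∃ δ > (0:ℝ), ∀ y : ℤ → A, d1 x y < δ →
    ∀ n : ℕ, d1 (F^[n] x) (F^[n] y) < ε

/-- `F` is sensitive to initial conditions on `ℤ → A`. -/
def IsSensitive1 {A : Type*} (F : (ℤ → A) → (ℤ → A)) : Prop :=
  ∃ ε > (0:ℝ), ∀ (x : ℤ → A), ∀ δ > (0:ℝ), ∃ (y : ℤ → A) (n : ℕ),
    d1 x y < δ ∧ d1 (F^[n] x) (F^[n] y) > ε

/-- `F` is the radius-`r` cellular automaton with local rule `f`. -/
def IsRadiusCA1 {A : Type*} (r : ℕ) (f : (Fin (2 * r + 1) → A) → A)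
    (F : (ℤ → A) → (ℤ → A)) : Prop :=
  ∀ (x : ℤ → A) (i : ℤ), F x i = f (fun j => x (i - (r : ℤ) + (j : ℤ)))

open Classical in
/-- The Cantor-like distance on `(ℤ × ℤ) → A`. -/
noncomputable def dC {A : Type*} (x y : (ℤ × ℤ) → A) : ℝ :=
  if x = y then 0
  else (2 : ℝ) ^
    (-((sInf {n : ℕ | ∃ i : ℤ × ℤ, x i ≠ y i ∧ max i.1.natAbs i.2.natAbs = n} : ℕ) : ℤ))

/-- `x` is an equicontinuous point of `G` on `(ℤ × ℤ) → A`. -/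
def IsEquicontinuousPt2 {A : Type*} (G : ((ℤ × ℤ) → A) → ((ℤ × ℤ) → A))
    (x : (ℤ × ℤ) → A) : Prop :=
  ∀ ε > (0:ℝ), ∃ δ > (0:ℝ), ∀ y : (ℤ × ℤ) → A, dC x y < δ →
    ∀ n : ℕ, dC (G^[n] x) (G^[n] y) < ε

/-- `G` is sensitive to initial conditions on `(ℤ × ℤ) → A`. -/
def IsSensitive2 {A : Type*} (G : ((ℤ × ℤ) → A) → ((ℤ × ℤ) → A)) : Prop :=
  ∃ ε > (0:ℝ), ∀ (x : (ℤ × ℤ) → A), ∀ δ > (0:ℝ), ∃ (y : (ℤ × ℤ) → A) (n : ℕ),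
    dC x y < δ ∧ dC (G^[n] x) (G^[n] y) > ε

section Aux

private lemma two_zpow_pos' (m : ℤ) : (0:ℝ) < 2 ^ m := zpow_pos (by norm_num) m

private lemma two_zpow_lt_iff' {a b : ℤ} : (2:ℝ) ^ a < 2 ^ b ↔ a < b :=
  zpow_lt_zpow_iff_right₀ one_lt_two

private lemma two_zpow_mono {a b : ℤ} (h : a ≤ b) : (2:ℝ) ^ a ≤ 2 ^ b :=
  zpow_le_zpow_right₀ one_le_two h

private lemma exists_zpow_lt {δ : ℝ} (hδ : 0 < δ) : ∃ K : ℕ, (2:ℝ) ^ (-(K:ℤ)) < δ := by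
  obtain ⟨K, hK⟩ := exists_pow_lt_of_lt_one hδ (by norm_num : (1:ℝ)/2 < 1)
  refine ⟨K, ?_⟩
  have h2 : ((1:ℝ)/2) ^ K = (2:ℝ) ^ (-(K:ℤ)) := by
    rw [zpow_neg, zpow_natCast]; simp [one_div, inv_pow]
  linarith

variable {A : Type*}

private lemma d1_attained {x y : ℤ → A} (h : x ≠ y) :
    ∃ i : ℤ, x i ≠ y i ∧ d1 x y = 2 ^ (-(i.natAbs : ℤ)) := by
  have hne : {n : ℕ | ∃ i : ℤ, x i ≠ y i ∧ i.natAbs = n}.Nonempty := by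
    obtain ⟨i, hi⟩ := Function.ne_iff.mp h
    exact ⟨i.natAbs, i, hi, rfl⟩
  obtain ⟨i, hi, hn⟩ := Nat.sInf_mem hne
  exact ⟨i, hi, by rw [d1, if_neg h, hn]⟩

private lemma le_d1 {x y : ℤ → A} {i : ℤ} (h : x i ≠ y i) :
    (2:ℝ) ^ (-(i.natAbs : ℤ)) ≤ d1 x y := by
  have hxy : x ≠ y := fun e => h (congrFun e i)
  rw [d1, if_neg hxy]
  exact two_zpow_mono (neg_le_neg (Nat.cast_le.mpr (Nat.sInf_le ⟨i, h, rfl⟩)))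

private lemma d1_lt_of_forall {x y : ℤ → A} {ε : ℝ} (hε : 0 < ε)
    (h : ∀ i : ℤ, x i ≠ y i → (2:ℝ) ^ (-(i.natAbs : ℤ)) < ε) : d1 x y < ε := by
  by_cases hxy : x = y
  · rw [d1, if_pos hxy]; exact hε
  · obtain ⟨i, hi, he⟩ := d1_attained hxy
    rw [he]; exact h i hi

private lemma dC_attained {x y : (ℤ × ℤ) → A} (h : x ≠ y) :
    ∃ z : ℤ × ℤ, x z ≠ y z ∧ dC x y = 2 ^ (-((max z.1.natAbs z.2.natAbs : ℕ) : ℤ)) := by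
  have hne : {n : ℕ | ∃ i : ℤ × ℤ, x i ≠ y i ∧ max i.1.natAbs i.2.natAbs = n}.Nonempty := by
    obtain ⟨z, hz⟩ := Function.ne_iff.mp h
    exact ⟨_, z, hz, rfl⟩
  obtain ⟨z, hz, hn⟩ := Nat.sInf_mem hne
  exact ⟨z, hz, by rw [dC, if_neg h, hn]⟩

private lemma le_dC {x y : (ℤ × ℤ) → A} {z : ℤ × ℤ} (h : x z ≠ y z) :
    (2:ℝ) ^ (-((max z.1.natAbs z.2.natAbs : ℕ) : ℤ)) ≤ dC x y := by
  have hxy : x ≠ y := fun e => h (congrFun e z)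
  rw [dC, if_neg hxy]
  exact two_zpow_mono (neg_le_neg (Nat.cast_le.mpr (Nat.sInf_le ⟨z, h, rfl⟩)))

private lemma dC_lt_of_forall {x y : (ℤ × ℤ) → A} {ε : ℝ} (hε : 0 < ε)
    (h : ∀ z : ℤ × ℤ, x z ≠ y z → (2:ℝ) ^ (-((max z.1.natAbs z.2.natAbs : ℕ) : ℤ)) < ε) :
    dC x y < ε := by
  by_cases hxy : x = y
  · rw [dC, if_pos hxy]; exact hε
  · obtain ⟨z, hz, he⟩ := dC_attained hxy
    rw [he]; exact h z hz

/-- If two 2D configurations agree off row `0`, the 2D distance equals the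
1D distance of their rows `0`. -/
private lemma dC_eq_d1 {x y : (ℤ × ℤ) → A} (h : ∀ i j : ℤ, j ≠ 0 → x (i, j) = y (i, j)) :
    dC x y = d1 (fun i => x (i, 0)) (fun i => y (i, 0)) := by
  have hiff : x = y ↔ (fun i => x (i, 0)) = (fun i => y (i, 0)) := by
    constructor
    · intro e; rw [e]
    · intro e; funext z
      obtain ⟨i, j⟩ := z
      rcases eq_or_ne j 0 with h0 | h0
      · subst h0; exact congrFun e i
      · exact h i j h0
  have hset : {n : ℕ | ∃ z : ℤ × ℤ, x z ≠ y z ∧ max z.1.natAbs z.2.natAbs = n}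
      = {n : ℕ | ∃ i : ℤ, (fun i => x (i, 0)) i ≠ (fun i => y (i, 0)) i ∧ i.natAbs = n} := by
    ext n
    constructor
    · rintro ⟨⟨i, j⟩, hz, hn⟩
      have hj : j = 0 := by by_contra hj; exact hz (h i j hj)
      subst hj
      exact ⟨i, hz, by simpa using hn⟩
    · rintro ⟨i, hi, hn⟩
      exact ⟨(i, 0), hi, by simpa using hn⟩
  rw [dC, d1]
  by_cases hxy : x = y
  · rw [if_pos hxy, if_pos (hiff.mp hxy)]
  · rw [if_neg hxy, if_neg (fun e => hxy (hiff.mpr e)), hset]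

end Aux

/-- Lifting a 1D CA to 2D by acting on each horizontal row independently
preserves sensitivity and existence of equicontinuous points. -/
theorem lift_1d_to_2d_sensitivity_equicontinuity
    (A : Type*) [Fintype A]
    (r : ℕ) (f : (Fin (2 * r + 1) → A) → A)
    (F : (ℤ → A) → (ℤ → A)) (hF : IsRadiusCA1 r f F)
    (G : ((ℤ × ℤ) → A) → ((ℤ × ℤ) → A))
    (hG : ∀ (x : (ℤ × ℤ) → A) (z : ℤ × ℤ),
      G x z = f (fun j => x (z.1 - (r : ℤ) + (j : ℤ), z.2))) :
    (IsSensitive2 G ↔ IsSensitive1 F) ∧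
    ((∃ x, IsEquicontinuousPt2 G x) ↔ (∃ x, IsEquicontinuousPt1 F x)) := by
  -- `G` acts on each row by `F`
  have hrowG : ∀ (y : (ℤ × ℤ) → A) (i j : ℤ), G y (i, j) = F (fun i' => y (i', j)) i := by
    intro y i j
    rw [hG y (i, j), hF (fun i' => y (i', j)) i]
  have hIter : ∀ (n : ℕ) (x : (ℤ × ℤ) → A) (i j : ℤ),
      G^[n] x (i, j) = F^[n] (fun i' => x (i', j)) i := by
    intro n
    induction n with
    | zero => intro x i j; simp
    | succ n ih =>
      intro x i j
      rw [Function.iterate_succ_apply', Function.iterate_succ_apply', hrowG]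
      congr 1
      funext i'
      exact ih x i' j
  -- distance transfer for configurations agreeing off row 0
  have key : ∀ (x y : (ℤ × ℤ) → A), (∀ i j : ℤ, j ≠ 0 → x (i, j) = y (i, j)) →
      ∀ n : ℕ, dC (G^[n] x) (G^[n] y)
        = d1 (F^[n] (fun i => x (i, 0))) (F^[n] (fun i => y (i, 0))) := by
    intro x y h n
    have hoff : ∀ i j : ℤ, j ≠ 0 → G^[n] x (i, j) = G^[n] y (i, j) := by
      intro i j hj
      rw [hIter n x i j, hIter n y i j]
      have e : (fun i' => x (i', j)) = fun i' => y (i', j) := funext fun i' => h i' j hj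
      rw [e]
    have e1 : (fun i => G^[n] x (i, 0)) = F^[n] (fun i' => x (i', 0)) :=
      funext fun i => hIter n x i 0
    have e2 : (fun i => G^[n] y (i, 0)) = F^[n] (fun i' => y (i', 0)) :=
      funext fun i => hIter n y i 0
    rw [dC_eq_d1 hoff, e1, e2]
  constructor
  · constructor
    · -- IsSensitive2 G → IsSensitive1 F
      rintro ⟨ε, hε, H⟩
      refine ⟨ε, hε, ?_⟩
      intro x δ hδ
      have hδ' : 0 < min δ ε := lt_min hδ hε
      obtain ⟨y, n, hy1, hy2⟩ := H (fun z => x z.1) (min δ ε) hδ'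
      have hne : G^[n] (fun z : ℤ × ℤ => x z.1) ≠ G^[n] y := by
        intro e
        rw [e] at hy2
        have h0 : dC (G^[n] y) (G^[n] y) = 0 := by rw [dC, if_pos rfl]
        rw [h0] at hy2
        linarith
      obtain ⟨⟨i, j⟩, hz, hzeq⟩ := dC_attained hne
      have hεlt : ε < (2:ℝ) ^ (-((max i.natAbs j.natAbs : ℕ) : ℤ)) := by
        rw [← hzeq]; exact hy2
      have hεj : ε < (2:ℝ) ^ (-(j.natAbs : ℤ)) :=
        lt_of_lt_of_le hεlt (two_zpow_mono (neg_le_neg (Nat.cast_le.mpr (le_max_right _ _))))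
      refine ⟨fun i' => y (i', j), n, ?_, ?_⟩
      · refine d1_lt_of_forall hδ ?_
        intro i' hi'
        have h1 := le_dC (x := fun z : ℤ × ℤ => x z.1) (y := y) (z := (i', j)) hi'
        have h2 : (2:ℝ) ^ (-((max i'.natAbs j.natAbs : ℕ) : ℤ)) < min δ ε :=
          lt_of_le_of_lt h1 hy1
        have h3 : (2:ℝ) ^ (-((max i'.natAbs j.natAbs : ℕ) : ℤ)) < 2 ^ (-(j.natAbs : ℤ)) :=
          lt_trans (lt_of_lt_of_le h2 (min_le_right _ _)) hεj
        have h4 : (j.natAbs : ℤ) < ((max i'.natAbs j.natAbs : ℕ) : ℤ) := by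
          have := two_zpow_lt_iff'.mp h3; linarith
        have h4' : j.natAbs < max i'.natAbs j.natAbs := by exact_mod_cast h4
        have h5 : max i'.natAbs j.natAbs = i'.natAbs := by
          rcases max_choice i'.natAbs j.natAbs with h | h
          · exact h
          · omega
        have h6 : (2:ℝ) ^ (-(i'.natAbs : ℤ)) < min δ ε := by rw [← h5]; exact h2
        exact lt_of_lt_of_le h6 (min_le_left _ _)
      · have hieq : G^[n] (fun z : ℤ × ℤ => x z.1) (i, j) = F^[n] x i := hIter n _ i j
        have hjeq : G^[n] y (i, j) = F^[n] (fun i' => y (i', j)) i := hIter n y i j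
        have hdiff : F^[n] x i ≠ F^[n] (fun i' => y (i', j)) i := by
          rw [← hieq, ← hjeq]; exact hz
        have h7 := le_d1 hdiff
        have h8 : (2:ℝ) ^ (-((max i.natAbs j.natAbs : ℕ) : ℤ)) ≤ 2 ^ (-(i.natAbs : ℤ)) :=
          two_zpow_mono (neg_le_neg (Nat.cast_le.mpr (le_max_left _ _)))
        exact lt_of_lt_of_le hεlt (le_trans h8 h7)
    · -- IsSensitive1 F → IsSensitive2 G
      rintro ⟨ε, hε, H⟩
      refine ⟨ε, hε, ?_⟩
      intro x δ hδ
      obtain ⟨y₀, n, hy1, hy2⟩ := H (fun i => x (i, 0)) δ hδ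
      set y : (ℤ × ℤ) → A := fun z => if z.2 = 0 then y₀ z.1 else x z with hy
      have hoff : ∀ i j : ℤ, j ≠ 0 → x (i, j) = y (i, j) := by
        intro i j hj; simp [hy, hj]
      have hrow0 : (fun i => y (i, 0)) = y₀ := by funext i; simp [hy]
      refine ⟨y, n, ?_, ?_⟩
      · rw [dC_eq_d1 hoff, hrow0]; exact hy1
      · rw [key x y hoff n, hrow0]; exact hy2
  · constructor
    · -- equicontinuous point of G ⇒ equicontinuous point of F
      rintro ⟨x, hx⟩
      refine ⟨fun i => x (i, 0), ?_⟩
      intro ε hε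
      obtain ⟨δ, hδ, hδ'⟩ := hx ε hε
      refine ⟨δ, hδ, ?_⟩
      intro y₀ hy₀ n
      set y : (ℤ × ℤ) → A := fun z => if z.2 = 0 then y₀ z.1 else x z with hy
      have hoff : ∀ i j : ℤ, j ≠ 0 → x (i, j) = y (i, j) := by
        intro i j hj; simp [hy, hj]
      have hrow0 : (fun i => y (i, 0)) = y₀ := by funext i; simp [hy]
      have h1 : dC x y < δ := by rw [dC_eq_d1 hoff, hrow0]; exact hy₀
      have h2 := hδ' y h1 n
      rw [key x y hoff n, hrow0] at h2
      exact h2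
    · -- equicontinuous point of F ⇒ equicontinuous point of G
      rintro ⟨x₀, hx₀⟩
      refine ⟨fun z => x₀ z.1, ?_⟩
      intro ε hε
      obtain ⟨K, hK⟩ := exists_zpow_lt hε
      obtain ⟨δ, hδ, hδ'⟩ := hx₀ ε hε
      refine ⟨min δ ((2:ℝ) ^ (-(K : ℤ))), lt_min hδ (two_zpow_pos' _), ?_⟩
      intro y hy n
      refine dC_lt_of_forall hε ?_
      rintro ⟨i, j⟩ hz
      by_cases hjK : K ≤ j.natAbs
      · refine lt_of_le_of_lt ?_ hK
        exact two_zpow_mono (neg_le_neg (Nat.cast_le.mpr (le_trans hjK (le_max_right _ _))))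
      · push_neg at hjK
        have hd1 : d1 x₀ (fun i' => y (i', j)) < δ := by
          refine d1_lt_of_forall hδ ?_
          intro i' hi'
          have h1 := le_dC (x := fun z : ℤ × ℤ => x₀ z.1) (y := y) (z := (i', j)) hi'
          have h2 : (2:ℝ) ^ (-((max i'.natAbs j.natAbs : ℕ) : ℤ)) < 2 ^ (-(K : ℤ)) :=
            lt_of_le_of_lt h1 (lt_of_lt_of_le hy (min_le_right _ _))
          have h3 : (K : ℤ) < ((max i'.natAbs j.natAbs : ℕ) : ℤ) := by
            have := two_zpow_lt_iff'.mp h2; linarith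
          have h3' : K < max i'.natAbs j.natAbs := by exact_mod_cast h3
          have h4 : max i'.natAbs j.natAbs = i'.natAbs := by
            rcases max_choice i'.natAbs j.natAbs with h | h
            · exact h
            · omega
          have h5 : (2:ℝ) ^ (-(i'.natAbs : ℤ)) < min δ ((2:ℝ) ^ (-(K : ℤ))) := by
            rw [← h4]; exact lt_of_le_of_lt h1 hy
          exact lt_of_lt_of_le h5 (min_le_left _ _)
        have h6 := hδ' _ hd1 n
        have hieq : G^[n] (fun z : ℤ × ℤ => x₀ z.1) (i, j) = F^[n] x₀ i := hIter n _ i j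
        have hjeq : G^[n] y (i, j) = F^[n] (fun i' => y (i', j)) i := hIter n y i j
        have hdiff : F^[n] x₀ i ≠ F^[n] (fun i' => y (i', j)) i := by
          rw [← hieq, ← hjeq]; exact hz
        have h7 := le_d1 hdiff
        have h8 : (2:ℝ) ^ (-((max i.natAbs j.natAbs : ℕ) : ℤ)) ≤ 2 ^ (-(i.natAbs : ℤ)) :=
          two_zpow_mono (neg_le_neg (Nat.cast_le.mpr (le_max_left _ _)))
        exact lt_of_le_of_lt (le_trans h8 h7) h6
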